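/- Let p ≥ 2 and let P_{n,p} denote the Legendre polynomial of degree n in p dimensions defined by the Rodrigues formula. Then |P_{n,p}(t)| ≤ 1 for all t ∈ (−1,1). -/

import Mathlib

/-- The falling factorial `(a)_n = a(a−1)⋯(a−n+1)` of a real number `a`. -/
noncomputable def fallingFactorial (a : ℝ) (n : ℕ) : ℝ :=
  ∏ i ∈ Finset.range n, (a - i)

/-- The Legendre polynomial of degree `n` in `p` dimensions, defined on `(−1,1)` by
the Rodrigues formula
`P_{n,p}(t) = ((−1)^n / (2^n (n+(p−3)/2)_n)) (1−t²)^{(3−p)/2} (d/dt)^n (1−t²)^{n+(p−3)/2}`,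
where the powers of `1−t²` are real powers. -/
noncomputable def legendreP (p n : ℕ) (t : ℝ) : ℝ :=
  ((-1 : ℝ) ^ n / (2 ^ n * fallingFactorial ((n : ℝ) + ((p : ℝ) - 3) / 2) n)) *
    (1 - t ^ 2) ^ (((3 : ℝ) - (p : ℝ)) / 2) *
    iteratedDeriv n (fun s : ℝ => (1 - s ^ 2) ^ ((n : ℝ) + ((p : ℝ) - 3) / 2)) t

/-!
By the Leibniz rule, `(1-t²)^{(3-p)/2} (d/dt)^n (1-t²)^{n+(p-3)/2}` is a polynomial in `1-t` and
`1+t`, so `P_{n,p}` extends to a polynomial `q` on `ℝ` with `q(1) = 1` and `q(-1) = (-1)^n`.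
Differentiating `(1-t²)u' + 2rtu = 0`, `u = (1-t²)^r`, `n+1` times gives a second-order equation
for `u^{(n)}`, which after multiplication by `(1-t²)^{(3-p)/2}` becomes the Gegenbauer equation
`(1-t²)q'' - (p-1)tq' + λq = 0` with `λ = n(n+p-2)`. For `n ≥ 1` (Sonine) the energy
`λq² + (1-t²)q'²` has derivative `2(p-2)tq'²`, so on `[-1,1]` it is largest at `±1`, where it
equals `λq(±1)² = λ`; hence `q² ≤ 1`.
-/

open Set Filter Topology
open scoped ContDiff

lemma fallingFactorial_eq_descPochhammer_eval (a : ℝ) (n : ℕ) :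
    fallingFactorial a n = (descPochhammer ℝ n).eval a :=
  (descPochhammer_eval_eq_prod_range n a).symm

lemma fallingFactorial_pos {a : ℝ} {n : ℕ} (h : (n : ℝ) - 1 < a) : 0 < fallingFactorial a n :=
  Finset.prod_pos fun i hi => by
    have : (i : ℝ) + 1 ≤ n := by exact_mod_cast Finset.mem_range.mp hi
    linarith

lemma iteratedDeriv_rpow_const (r x : ℝ) (k : ℕ) :
    iteratedDeriv k (fun x : ℝ => x ^ r) x = fallingFactorial r k * x ^ (r - k) := by
  rw [iteratedDeriv_eq_iterate, Real.iter_deriv_rpow_const, fallingFactorial_eq_descPochhammer_eval]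

lemma one_sub_sq_pos {t : ℝ} (ht : t ∈ Ioo (-1 : ℝ) 1) : 0 < 1 - t ^ 2 := by
  nlinarith [ht.1, ht.2]

noncomputable def rodriguesSum (r : ℝ) (n : ℕ) (t : ℝ) : ℝ :=
  ∑ j ∈ Finset.range (n + 1), n.choose j * ((-1) ^ j * fallingFactorial r j) *
    fallingFactorial r (n - j) * ((1 - t) ^ (n - j) * (1 + t) ^ j)

lemma iteratedDeriv_one_sub_sq_rpow (r : ℝ) (n : ℕ) {t : ℝ} (ht : t ∈ Ioo (-1 : ℝ) 1) :
    iteratedDeriv n (fun s => (1 - s ^ 2) ^ r) t = ∑ j ∈ Finset.range (n + 1), n.choose j *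
      ((-1) ^ j * fallingFactorial r j * (1 - t) ^ (r - j)) *
      (fallingFactorial r (n - j) * (1 + t) ^ (r - (n - j : ℕ))) := by
  have hm : 0 < 1 - t := by linarith [ht.2]
  have hp : 0 < 1 + t := by linarith [ht.1]
  have hfac : (fun s : ℝ => (1 - s ^ 2) ^ r) =ᶠ[𝓝 t]
      (fun s => (1 - s) ^ r) * (fun s => (1 + s) ^ r) := by
    filter_upwards [isOpen_Ioo.mem_nhds ht] with s hs
    rw [Pi.mul_apply, ← Real.mul_rpow (by linarith [hs.2]) (by linarith [hs.1])]
    ring_nf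
  rw [hfac.iteratedDeriv_eq, iteratedDeriv_mul
    ((contDiffAt_const.sub contDiffAt_fun_id).rpow_const_of_ne hm.ne')
    ((contDiffAt_const.add contDiffAt_fun_id).rpow_const_of_ne hp.ne')]
  refine Finset.sum_congr rfl fun j _ => ?_
  rw [iteratedDeriv_comp_const_sub (f := fun x : ℝ => x ^ r),
    iteratedDeriv_comp_const_add (f := fun x : ℝ => x ^ r)]
  simp only [iteratedDeriv_rpow_const, smul_eq_mul]
  ring

lemma one_sub_sq_rpow_mul_iteratedDeriv (r : ℝ) (n : ℕ) {t : ℝ}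
    (ht : t ∈ Ioo (-1 : ℝ) 1) :
    (1 - t ^ 2) ^ (n - r) * iteratedDeriv n (fun s => (1 - s ^ 2) ^ r) t = rodriguesSum r n t := by
  have hm : 0 < 1 - t := by linarith [ht.2]
  have hp : 0 < 1 + t := by linarith [ht.1]
  rw [iteratedDeriv_one_sub_sq_rpow r n ht, rodriguesSum, Finset.mul_sum]
  refine Finset.sum_congr rfl fun j hj => ?_
  have hjn : j ≤ n := Nat.lt_succ_iff.mp (Finset.mem_range.mp hj)
  have hweight : (1 - t ^ 2) ^ (n - r) = (1 - t) ^ (n - r) * (1 + t) ^ (n - r) := by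
    rw [← Real.mul_rpow hm.le hp.le]; ring_nf
  have hminus : (1 - t) ^ (n - r) * (1 - t) ^ (r - j) = (1 - t) ^ (n - j) := by
    rw [← Real.rpow_add hm, ← Real.rpow_natCast, Nat.cast_sub hjn]; ring_nf
  have hplus : (1 + t) ^ (n - r) * (1 + t) ^ (r - (n - j : ℕ)) = (1 + t) ^ j := by
    rw [← Real.rpow_add hp, ← Real.rpow_natCast, Nat.cast_sub hjn]; ring_nf
  rw [hweight, ← hminus, ← hplus]
  ring

lemma hasDerivAt_one_sub_sq_rpow (a : ℝ) {t : ℝ} (ht : t ∈ Ioo (-1 : ℝ) 1) :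
    HasDerivAt (fun s => (1 - s ^ 2) ^ a) (-2 * a * t * (1 - t ^ 2) ^ (a - 1)) t := by
  convert ((hasDerivAt_pow 2 t).const_sub 1).rpow_const (p := a) (Or.inl (one_sub_sq_pos ht).ne')
    using 1
  ring

lemma ContDiffOn.iteratedDeriv_of_isOpen {f : ℝ → ℝ} {s : Set ℝ}
    (hf : ContDiffOn ℝ ∞ f s) (hs : IsOpen s) (k : ℕ) :
    ContDiffOn ℝ ∞ (iteratedDeriv k f) s := by
  induction k with
  | zero => simpa
  | succ k ih => simpa [iteratedDeriv_succ] using ih.deriv_of_isOpen hs le_rfl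

lemma contDiffOn_one_sub_sq_rpow (r : ℝ) :
    ContDiffOn ℝ ∞ (fun s : ℝ => (1 - s ^ 2) ^ r) (Ioo (-1) 1) := fun _ hs =>
  ((contDiff_const.sub (contDiff_id.pow 2)).contDiffAt.rpow_const_of_ne
    (one_sub_sq_pos hs).ne').contDiffWithinAt

lemma hasDerivAt_iteratedDeriv_one_sub_sq_rpow (r : ℝ) (k : ℕ) {t : ℝ}
    (ht : t ∈ Ioo (-1 : ℝ) 1) :
    HasDerivAt (iteratedDeriv k fun s => (1 - s ^ 2) ^ r)
      (iteratedDeriv (k + 1) (fun s => (1 - s ^ 2) ^ r) t) t := by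
  have hdiff := ((contDiffOn_one_sub_sq_rpow r).iteratedDeriv_of_isOpen isOpen_Ioo k
    ).differentiableOn (by simp)
  rw [iteratedDeriv_succ]
  exact (hdiff.differentiableAt (isOpen_Ioo.mem_nhds ht)).hasDerivAt

lemma one_sub_sq_mul_iteratedDeriv_one_sub_sq_rpow (r : ℝ) (k : ℕ) {t : ℝ}
    (ht : t ∈ Ioo (-1 : ℝ) 1) :
    (1 - t ^ 2) * iteratedDeriv (k + 2) (fun s => (1 - s ^ 2) ^ r) t
      + 2 * (r - k - 1) * t * iteratedDeriv (k + 1) (fun s => (1 - s ^ 2) ^ r) t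
      + (k + 1) * (2 * r - k) * iteratedDeriv k (fun s => (1 - s ^ 2) ^ r) t = 0 := by
  set u : ℝ → ℝ := fun s => (1 - s ^ 2) ^ r
  have hD (k : ℕ) {s : ℝ} (hs : s ∈ Ioo (-1 : ℝ) 1) :=
    hasDerivAt_iteratedDeriv_one_sub_sq_rpow r k hs
  have hsq (s : ℝ) : HasDerivAt (fun s : ℝ => 1 - s ^ 2) (-2 * s) s := by
    simpa using (hasDerivAt_pow 2 s).const_sub 1
  have hzero {F : ℝ → ℝ} {d s : ℝ} (hF0 : ∀ x ∈ Ioo (-1 : ℝ) 1, F x = 0)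
      (hs : s ∈ Ioo (-1 : ℝ) 1) (hF : HasDerivAt F d s) : d = 0 :=
    hF.unique <| (hasDerivAt_const s 0).congr_of_eventuallyEq <|
      eventually_of_mem (isOpen_Ioo.mem_nhds hs) hF0
  induction k generalizing t with
  | zero =>
    have hbase : ∀ s ∈ Ioo (-1 : ℝ) 1,
        (1 - s ^ 2) * iteratedDeriv 1 u s + 2 * r * s * iteratedDeriv 0 u s = 0 := by
      intro s hs
      rw [iteratedDeriv_one, iteratedDeriv_zero, (hasDerivAt_one_sub_sq_rpow r hs).deriv]
      have hpos := (one_sub_sq_pos hs).ne'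
      rw [Real.rpow_sub_one hpos]
      field_simp
      ring
    have := hzero hbase ht
      (((hsq t).mul (hD 1 ht)).add (((hasDerivAt_id' t).const_mul (2 * r)).mul (hD 0 ht)))
    push_cast
    linear_combination this
  | succ k ih =>
    have := hzero (fun s hs => ih hs) ht
      ((((hsq t).mul (hD (k + 2) ht)).add
        (((hasDerivAt_id' t).const_mul (2 * (r - k - 1))).mul (hD (k + 1) ht))).add
        ((hD k ht).const_mul ((k + 1) * (2 * r - k))))
    push_cast
    linear_combination this

lemma ode_one_sub_sq_rpow_mul {a μ : ℝ} {v : ℝ → ℝ} (hv : ContDiffOn ℝ 2 v (Ioo (-1) 1))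
    (hode : ∀ s ∈ Ioo (-1 : ℝ) 1,
      (1 - s ^ 2) * deriv (deriv v) s - 2 * (a + 1) * s * deriv v s + μ * v s = 0)
    {t : ℝ} (ht : t ∈ Ioo (-1 : ℝ) 1) :
    (1 - t ^ 2) * deriv (deriv fun s => (1 - s ^ 2) ^ a * v s) t
      - 2 * (1 - a) * t * deriv (fun s => (1 - s ^ 2) ^ a * v s) t
      + (μ + 2 * a) * ((1 - t ^ 2) ^ a * v t) = 0 := by
  have hv1 {s : ℝ} (hs : s ∈ Ioo (-1 : ℝ) 1) : HasDerivAt v (deriv v s) s :=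
    ((hv.differentiableOn (by norm_num)).differentiableAt (isOpen_Ioo.mem_nhds hs)).hasDerivAt
  have hv2 : HasDerivAt (deriv v) (deriv (deriv v) t) t := by
    have hv' := hv.deriv_of_isOpen isOpen_Ioo (by norm_num : (1 : WithTop ℕ∞) + 1 ≤ 2)
    exact ((hv'.differentiableOn one_ne_zero).differentiableAt (isOpen_Ioo.mem_nhds ht)).hasDerivAt
  have hf1 {s : ℝ} (hs : s ∈ Ioo (-1 : ℝ) 1) :=
    (hasDerivAt_one_sub_sq_rpow a hs).fun_mul (hv1 hs)
  have hderiv : deriv (fun s => (1 - s ^ 2) ^ a * v s) =ᶠ[𝓝 t]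
      fun s => -2 * a * s * (1 - s ^ 2) ^ (a - 1) * v s + (1 - s ^ 2) ^ a * deriv v s :=
    eventually_of_mem (isOpen_Ioo.mem_nhds ht) fun s hs => (hf1 hs).deriv
  have hf2 := ((((hasDerivAt_id' t).const_mul (-2 * a)).fun_mul
    (hasDerivAt_one_sub_sq_rpow (a - 1) ht)).fun_mul (hv1 ht)).fun_add
    ((hasDerivAt_one_sub_sq_rpow a ht).fun_mul hv2)
  rw [hderiv.deriv_eq, hf2.deriv, (hf1 ht).deriv]
  have hx := (one_sub_sq_pos ht).ne'
  have h1 : (1 - t ^ 2) ^ (a - 1) = (1 - t ^ 2) * (1 - t ^ 2) ^ (a - 1 - 1) := by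
    rw [Real.rpow_sub_one hx (a - 1)]; field_simp
  have h2 : (1 - t ^ 2) ^ a = (1 - t ^ 2) * (1 - t ^ 2) ^ (a - 1) := by
    rw [Real.rpow_sub_one hx a]; field_simp
  rw [h2, h1]
  linear_combination (1 - t ^ 2) ^ 2 * (1 - t ^ 2) ^ (a - 1 - 1) * hode t ht

section Energy

variable {q : ℝ → ℝ} {c l : ℝ}

lemma hasDerivAt_energy (hq : ContDiff ℝ 2 q)
    (hode : ∀ s ∈ Ioo (-1 : ℝ) 1,
      (1 - s ^ 2) * deriv (deriv q) s - c * s * deriv q s + l * q s = 0)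
    {t : ℝ} (ht : t ∈ Ioo (-1 : ℝ) 1) :
    HasDerivAt (fun s => l * q s ^ 2 + (1 - s ^ 2) * deriv q s ^ 2)
      (2 * (c - 1) * t * deriv q t ^ 2) t := by
  have hq1 := (hq.differentiable two_ne_zero t).hasDerivAt
  have hq2 := ((hq.iterate_deriv' 1 1).differentiable one_ne_zero t).hasDerivAt
  refine (((hq1.pow 2).const_mul l).fun_add
    (((hasDerivAt_pow 2 t).const_sub 1).fun_mul (hq2.pow 2))).congr_deriv ?_
  simp only [Function.iterate_one, Pi.pow_apply]
  linear_combination 2 * deriv q t * hode t ht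

theorem sq_le_max_of_ode (hq : ContDiff ℝ 2 q) (hc : 1 ≤ c) (hl : 0 < l)
    (hode : ∀ s ∈ Ioo (-1 : ℝ) 1,
      (1 - s ^ 2) * deriv (deriv q) s - c * s * deriv q s + l * q s = 0)
    {t : ℝ} (ht : t ∈ Ioo (-1 : ℝ) 1) : q t ^ 2 ≤ max (q (-1) ^ 2) (q 1 ^ 2) := by
  set E : ℝ → ℝ := fun s => l * q s ^ 2 + (1 - s ^ 2) * deriv q s ^ 2
  have hE : Continuous E := by
    have := hq.continuous_deriv one_le_two
    fun_prop
  have hEt : l * q t ^ 2 ≤ E t := le_add_of_nonneg_right <|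
    mul_nonneg (one_sub_sq_pos ht).le (sq_nonneg _)
  suffices l * q t ^ 2 ≤ l * max (q (-1) ^ 2) (q 1 ^ 2) from le_of_mul_le_mul_left this hl
  rcases le_total 0 t with h0 | h0
  · have hmono : MonotoneOn E (Icc 0 1) := by
      refine monotoneOn_of_hasDerivWithinAt_nonneg (f' := fun s => 2 * (c - 1) * s * deriv q s ^ 2)
        (convex_Icc 0 1) hE.continuousOn (fun s hs => ?_)
        fun s hs => ?_
      all_goals rw [interior_Icc] at hs
      · exact (hasDerivAt_energy hq hode ⟨by linarith [hs.1], hs.2⟩).hasDerivWithinAt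
      · exact mul_nonneg (mul_nonneg (by linarith) hs.1.le) (sq_nonneg _)
    calc l * q t ^ 2 ≤ E t := hEt
      _ ≤ E 1 := hmono ⟨h0, ht.2.le⟩ (by simp) ht.2.le
      _ = l * q 1 ^ 2 := by simp [E]
      _ ≤ l * max (q (-1) ^ 2) (q 1 ^ 2) := by gcongr; exact le_max_right _ _
  · have hanti : AntitoneOn E (Icc (-1) 0) := by
      refine antitoneOn_of_hasDerivWithinAt_nonpos (f' := fun s => 2 * (c - 1) * s * deriv q s ^ 2)
        (convex_Icc (-1) 0) hE.continuousOn (fun s hs => ?_)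
        fun s hs => ?_
      all_goals rw [interior_Icc] at hs
      · exact (hasDerivAt_energy hq hode ⟨hs.1, by linarith [hs.2]⟩).hasDerivWithinAt
      · exact mul_nonpos_of_nonpos_of_nonneg
          (mul_nonpos_of_nonneg_of_nonpos (by linarith) hs.2.le) (sq_nonneg _)
    calc l * q t ^ 2 ≤ E t := hEt
      _ ≤ E (-1) := hanti (by simp) ⟨ht.1.le, h0⟩ ht.1.le
      _ = l * q (-1) ^ 2 := by simp [E]
      _ ≤ l * max (q (-1) ^ 2) (q 1 ^ 2) := by gcongr; exact le_max_left _ _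

end Energy

lemma legendreP_ode (p n : ℕ) {t : ℝ} (ht : t ∈ Ioo (-1 : ℝ) 1) :
    (1 - t ^ 2) * deriv (deriv (legendreP p n)) t - (p - 1) * t * deriv (legendreP p n) t
      + n * (n + p - 2) * legendreP p n t = 0 := by
  set r : ℝ := n + ((p : ℝ) - 3) / 2
  set C : ℝ := (-1) ^ n / (2 ^ n * fallingFactorial r n)
  set v : ℝ → ℝ := fun s => C * iteratedDeriv n (fun s => (1 - s ^ 2) ^ r) s
  have hP : legendreP p n = fun s => (1 - s ^ 2) ^ (((3 : ℝ) - p) / 2) * v s := by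
    funext s
    rw [legendreP]
    ring
  have hv : ContDiffOn ℝ 2 v (Ioo (-1) 1) :=
    (contDiffOn_const.mul
      ((contDiffOn_one_sub_sq_rpow r).iteratedDeriv_of_isOpen isOpen_Ioo n)).of_le
        (WithTop.coe_le_coe.mpr le_top)
  have hode : ∀ s ∈ Ioo (-1 : ℝ) 1, (1 - s ^ 2) * deriv (deriv v) s
      - 2 * ((3 - p) / 2 + 1) * s * deriv v s + (n + 1) * (n - 2 * ((3 - p) / 2)) * v s = 0 := by
    intro s hs
    simp only [v]
    rw [deriv_const_mul_field', deriv_const_mul_field', ← iteratedDeriv_succ,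
      ← iteratedDeriv_succ]
    linear_combination C * one_sub_sq_mul_iteratedDeriv_one_sub_sq_rpow r n hs
  rw [hP]
  linear_combination ode_one_sub_sq_rpow_mul hv hode ht

noncomputable def legendrePoly (p n : ℕ) (t : ℝ) : ℝ :=
  (-1) ^ n / (2 ^ n * fallingFactorial ((n : ℝ) + ((p : ℝ) - 3) / 2) n) *
    rodriguesSum ((n : ℝ) + ((p : ℝ) - 3) / 2) n t

lemma legendreP_eq_legendrePoly (p n : ℕ) {t : ℝ} (ht : t ∈ Ioo (-1 : ℝ) 1) :
    legendreP p n t = legendrePoly p n t := by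
  rw [legendreP, legendrePoly, ← one_sub_sq_rpow_mul_iteratedDeriv _ n ht, mul_assoc]
  congr 3
  ring

lemma contDiff_legendrePoly (p n : ℕ) : ContDiff ℝ ∞ (legendrePoly p n) := by
  unfold legendrePoly rodriguesSum
  fun_prop

lemma legendrePoly_ode (p n : ℕ) {t : ℝ} (ht : t ∈ Ioo (-1 : ℝ) 1) :
    (1 - t ^ 2) * deriv (deriv (legendrePoly p n)) t - (p - 1) * t * deriv (legendrePoly p n) t
      + n * (n + p - 2) * legendrePoly p n t = 0 := by
  have h : legendreP p n =ᶠ[𝓝 t] legendrePoly p n :=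
    eventually_of_mem (isOpen_Ioo.mem_nhds ht) fun s hs => legendreP_eq_legendrePoly p n hs
  rw [← h.deriv.deriv_eq, ← h.deriv_eq, ← h.eq_of_nhds]
  exact legendreP_ode p n ht

lemma rodriguesSum_one (r : ℝ) (n : ℕ) :
    rodriguesSum r n 1 = (-1) ^ n * 2 ^ n * fallingFactorial r n := by
  rw [rodriguesSum, Finset.sum_eq_single_of_mem n (Finset.self_mem_range_succ n)]
  · simp [fallingFactorial, one_add_one_eq_two]
    ring
  · intro j hj hjn
    have : n - j ≠ 0 := by have := Finset.mem_range.mp hj; omega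
    simp [this]

lemma rodriguesSum_neg_one (r : ℝ) (n : ℕ) :
    rodriguesSum r n (-1) = 2 ^ n * fallingFactorial r n := by
  rw [rodriguesSum, Finset.sum_eq_single_of_mem 0 (by simp)]
  · simp [fallingFactorial, one_add_one_eq_two]
    ring
  · intro j _ hj
    simp [hj]

lemma fallingFactorial_legendre_pos (p n : ℕ) (hp : 2 ≤ p) :
    0 < fallingFactorial ((n : ℝ) + ((p : ℝ) - 3) / 2) n := by
  have : (2 : ℝ) ≤ p := by exact_mod_cast hp
  exact fallingFactorial_pos (by linarith)

lemma legendrePoly_one (p n : ℕ) (hp : 2 ≤ p) : legendrePoly p n 1 = 1 := by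
  have := (fallingFactorial_legendre_pos p n hp).ne'
  rw [legendrePoly, rodriguesSum_one]
  generalize fallingFactorial _ n = F at *
  field_simp
  rw [← pow_mul, mul_comm, pow_mul]
  norm_num

lemma legendrePoly_neg_one (p n : ℕ) (hp : 2 ≤ p) : legendrePoly p n (-1) = (-1) ^ n := by
  have := (fallingFactorial_legendre_pos p n hp).ne'
  rw [legendrePoly, rodriguesSum_neg_one]
  generalize fallingFactorial _ n = F at *
  field_simp

/-- The Legendre polynomials in `p` dimensions are bounded by `1` in
absolute value on `(−1,1)`. -/
theorem legendreP_abs_le_one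
    (p : ℕ) (hp : 2 ≤ p) (n : ℕ) (t : ℝ) (ht : t ∈ Set.Ioo (-1 : ℝ) 1) :
    |legendreP p n t| ≤ 1 := by
  rw [legendreP_eq_legendrePoly p n ht, ← sq_le_one_iff_abs_le_one]
  rcases Nat.eq_zero_or_pos n with rfl | hn
  · simp [legendrePoly, rodriguesSum, fallingFactorial]
  have hp' : (2 : ℝ) ≤ p := by exact_mod_cast hp
  have hn' : (1 : ℝ) ≤ n := by exact_mod_cast hn
  have hsq := sq_le_max_of_ode (c := p - 1) (l := n * (n + p - 2))
    ((contDiff_legendrePoly p n).of_le (WithTop.coe_le_coe.mpr le_top)) (by linarith)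
    (by nlinarith) (fun s hs => legendrePoly_ode p n hs) ht
  simpa [legendrePoly_one p n hp, legendrePoly_neg_one p n hp, ← pow_mul] using hsq
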